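/- For each sufficiently small a > 0, let v_a be any L²(D_a)-normalized eigenfunction of the logarithmic potential operator N_{D_a} associated with its largest eigenvalue λ₀(D_a), chosen so that ∫_{D_a} v_a(x) dx ≥ 0. Then lim_{a → 0⁺} a⁻¹ · ∫_{D_a} v_a(x) dx = √π. -/

import Mathlib

open MeasureTheory Real

noncomputable section

/-- Points of the plane. -/
abbrev Pt2 := EuclideanSpace ℝ (Fin 2)

/-- The logarithmic kernel `-(1/(2π)) log |x - y|` in dimension 2. -/
def logKernel (x y : Pt2) : ℝ := -(1 / (2 * π)) * Real.log (dist x y)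

/-- The logarithmic potential operator `N_Ω`. -/
def NOp (Ω : Set Pt2) (f : Pt2 → ℝ) (x : Pt2) : ℝ := ∫ y in Ω, logKernel x y * f y

/-- The quadratic form `⟨N_Ω u, u⟩` on `L²(Ω)`. -/
def quadForm (Ω : Set Pt2) (u : Lp ℝ 2 (volume.restrict Ω)) : ℝ :=
  ∫ x in Ω, NOp Ω u x * u x

/-- The `n`-th eigenvalue of the logarithmic potential operator, via the max–min principle:
`λ_n(Ω) = sup` over `(n+1)`-dimensional subspaces `Ξ` of `L²(Ω)` of
`inf` over nonzero `u ∈ Ξ` of `⟨N_Ω u, u⟩ / ‖u‖²`. -/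
def eigen2 (Ω : Set Pt2) (n : ℕ) : ℝ :=
  sSup {r : ℝ | ∃ Ξ : Submodule ℝ (Lp ℝ 2 (volume.restrict Ω)),
    Module.finrank ℝ ↥Ξ = n + 1 ∧
    r = sInf {q : ℝ | ∃ u ∈ Ξ, u ≠ 0 ∧ q = quadForm Ω u / ‖u‖ ^ 2}}

/-- The sandwich hypothesis: `Ω` is squeezed between two discs of radii comparable to `a`. -/
def Sandwich (c₁ c₂ a : ℝ) (Ω : Set Pt2) : Prop :=
  ∃ (z₁ z₂ : Pt2) (ρ₁ ρ₂ : ℝ),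
    c₁ * a ≤ ρ₁ ∧ ρ₁ ≤ c₂ * a ∧ c₁ * a ≤ ρ₂ ∧ ρ₂ ≤ c₂ * a ∧
    Metric.ball z₁ ρ₁ ⊆ Ω ∧ Ω ⊆ Metric.ball z₂ ρ₂

/-
On `Ω × Ω` with `Ω` inside a disc of radius `a`, the logarithmic kernel splits as the constant
`β(a) = -log a / (2π)` plus the rescaled kernel `-(1/(2π)) log (|x - y| / a)`, whose `L²(Ω × Ω)`
norm is `O(a²)` by scaling (`log² |z|` is integrable near `0` in the plane). By Cauchy–Schwarz this
gives `⟨N_Ω w, w⟩ = β(a) (∫ w)² + O(a²) ‖w‖²`. Testing the max–min principle with the constant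
function gives `λ₀ ≥ β(a) |Ω| - O(a²)`, while for the normalized eigenfunction
`λ₀ = ⟨N_Ω v, v⟩ ≤ β(a) (∫ v)² + O(a²)`. Hence `|Ω| - (∫ v)² = O(a² / |log a|)`, and
`(∫ v)² ≤ |Ω|` by Cauchy–Schwarz; for `Ω = D_a` this squeezes `(a⁻¹ ∫ v)²` to `π`.
-/

open Set Metric Filter Topology
open scoped ENNReal

namespace MeasureTheory
variable {α : Type*} [MeasurableSpace α] {μ : Measure α}

theorem Lp.norm_two_sq_eq_integral_sq (u : Lp ℝ 2 μ) : ‖u‖ ^ 2 = ∫ x, u x ^ 2 ∂μ := by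
  rw [← real_inner_self_eq_norm_sq, L2.inner_def]
  simp [sq]

theorem MemLp.norm_toLp_two_sq {f : α → ℝ} (hf : MemLp f 2 μ) :
    ‖hf.toLp f‖ ^ 2 = ∫ x, f x ^ 2 ∂μ := by
  rw [Lp.norm_two_sq_eq_integral_sq]
  exact integral_congr_ae (hf.coeFn_toLp.mono fun x hx => by simp only [hx])

theorem abs_integral_mul_le_sqrt_mul_sqrt {f g : α → ℝ} (hf : MemLp f 2 μ) (hg : MemLp g 2 μ) :
    |∫ x, f x * g x ∂μ| ≤ √(∫ x, f x ^ 2 ∂μ) * √(∫ x, g x ^ 2 ∂μ) := by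
  have h := abs_real_inner_le_norm (hf.toLp f) (hg.toLp g)
  rwa [← sqrt_sq (norm_nonneg (hf.toLp f)), ← sqrt_sq (norm_nonneg (hg.toLp g)),
    hf.norm_toLp_two_sq, hg.norm_toLp_two_sq, L2.inner_def,
    integral_congr_ae ?_] at h
  filter_upwards [hf.coeFn_toLp, hg.coeFn_toLp] with x hfx hgx
  simp [hfx, hgx, mul_comm]

theorem sq_integral_le_measureReal_mul [IsFiniteMeasure μ] {f : α → ℝ} (hf : MemLp f 2 μ) :
    (∫ x, f x ∂μ) ^ 2 ≤ μ.real univ * ∫ x, f x ^ 2 ∂μ := by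
  have h := abs_integral_mul_le_sqrt_mul_sqrt hf (memLp_const (1 : ℝ))
  simp only [mul_one, one_pow, integral_const, smul_eq_mul] at h
  calc (∫ x, f x ∂μ) ^ 2 ≤ (√(∫ x, f x ^ 2 ∂μ) * √(μ.real univ)) ^ 2 := by
        rw [← sq_abs]; gcongr
    _ = μ.real univ * ∫ x, f x ^ 2 ∂μ := by
        rw [mul_pow, sq_sqrt (integral_nonneg fun x => sq_nonneg _), sq_sqrt measureReal_nonneg,
          mul_comm]

theorem memLp_two_mul_prod {β : Type*} [MeasurableSpace β] {ν : Measure β} [SFinite μ] [SFinite ν]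
    {f : α → ℝ} {g : β → ℝ} (hf : MemLp f 2 μ) (hg : MemLp g 2 ν) :
    MemLp (fun p : α × β => f p.1 * g p.2) 2 (μ.prod ν) := by
  refine (memLp_two_iff_integrable_sq
    (hf.aestronglyMeasurable.comp_fst.mul hg.aestronglyMeasurable.comp_snd)).2 ?_
  exact (hf.integrable_sq.mul_prod hg.integrable_sq).congr (.of_forall fun p => by simp [mul_pow])

theorem Measure.ae_prod_fst_ne_snd [MeasurableEq α] {ν : Measure α} [SFinite ν]
    [NullSingletonClass ν] : ∀ᵐ p ∂μ.prod ν, p.1 ≠ p.2 :=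
  (Measure.ae_prod_mem_iff_ae_ae_mem measurableSet_diagonal.compl).2
    (.of_forall fun x => (ν.ae_ne x).mono fun _ hy => Ne.symm hy)

end MeasureTheory

theorem Real.log_sq_le_four_div {s : ℝ} (hs : 0 < s) (hs2 : s ≤ 2) : log s ^ 2 ≤ 4 / s := by
  rw [le_div_iff₀ hs]
  rcases le_total s 1 with hs1 | hs1
  · have h := abs_log_mul_self_rpow_lt s (1 / 2) hs hs1 (by norm_num)
    have hsq : (s ^ (1 / 2 : ℝ)) ^ 2 = s := by
      rw [← Real.rpow_natCast, ← Real.rpow_mul hs.le]; norm_num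
    calc log s ^ 2 * s = |log s * s ^ (1 / 2 : ℝ)| ^ 2 := by rw [sq_abs, mul_pow, hsq]
      _ ≤ 4 := by nlinarith [abs_nonneg (log s * s ^ (1 / 2 : ℝ))]
  · have h0 := log_nonneg hs1
    have h1 : log s ≤ 1 := (log_le_sub_one_of_pos hs).trans (by linarith)
    nlinarith

def rescaledLogKernel (a : ℝ) (x y : Pt2) : ℝ := -(1 / (2 * π)) * log (dist x y / a)

theorem logKernel_eq_add_rescaledLogKernel {a : ℝ} (ha : a ≠ 0) {x y : Pt2} (hxy : x ≠ y) :
    logKernel x y = -log a / (2 * π) + rescaledLogKernel a x y := by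
  rw [logKernel, rescaledLogKernel, log_div (dist_ne_zero.2 hxy) ha]
  ring

theorem measurable_rescaledLogKernel (a : ℝ) :
    Measurable fun p : Pt2 × Pt2 => rescaledLogKernel a p.1 p.2 :=
  ((measurable_dist.div_const a).log).const_mul _

/-- The constant `C` with `∫∫_{Ω × Ω} (rescaledLogKernel a x y)² ≤ C a⁴` for every `Ω` inside a
disc of radius `a`. -/
def rescaledLogKernelConst : ℝ := (∫ z in ball (0 : Pt2) 2, log ‖z‖ ^ 2) / (4 * π)

theorem rescaledLogKernelConst_nonneg : 0 ≤ rescaledLogKernelConst :=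
  div_nonneg (setIntegral_nonneg measurableSet_ball fun _ _ => sq_nonneg _) (by positivity)

theorem integrableOn_log_norm_div_sq_ball {a : ℝ} (ha : 0 < a) :
    IntegrableOn (fun z : Pt2 => log (‖z‖ / a) ^ 2) (ball 0 (2 * a)) := by
  refine integrableOn_ball_of_norm_le_rpow (C := 4 * a) (α := 1) (by simp) (by simp) ?_
    ((measurable_norm.div_const a).log.pow_const 2).aestronglyMeasurable
  filter_upwards [self_mem_ae_restrict measurableSet_ball] with z hz
  rw [mem_ball_zero_iff] at hz
  rw [Real.norm_of_nonneg (sq_nonneg _), Real.rpow_neg_one]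
  rcases (norm_nonneg z).eq_or_lt with hz0 | hz0
  · simp [← hz0]
  calc log (‖z‖ / a) ^ 2 ≤ 4 / (‖z‖ / a) :=
        Real.log_sq_le_four_div (by positivity) (by rw [div_le_iff₀ ha]; linarith)
    _ = 4 * a * ‖z‖⁻¹ := by field_simp

theorem setIntegral_log_norm_div_sq_ball {a : ℝ} (ha : 0 < a) :
    ∫ z in ball (0 : Pt2) (2 * a), log (‖z‖ / a) ^ 2 = 4 * π * rescaledLogKernelConst * a ^ 2 := by
  have h := Measure.setIntegral_comp_smul_of_pos volume (fun z : Pt2 => log (‖z‖ / a) ^ 2)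
    (ball 0 2) ha
  rw [_root_.smul_ball ha.ne', smul_zero, Real.norm_of_nonneg ha.le, finrank_euclideanSpace_fin,
    mul_comm a 2] at h
  simp only [norm_smul, Real.norm_of_nonneg ha.le, mul_div_cancel_left₀ _ ha.ne', smul_eq_mul] at h
  rw [rescaledLogKernelConst, h]
  field_simp

theorem lintegral_log_dist_div_sq_le {a : ℝ} (ha : 0 < a) (x : Pt2) :
    ∫⁻ y in ball x (2 * a), ENNReal.ofReal (log (dist x y / a) ^ 2)
      ≤ ENNReal.ofReal (4 * π * rescaledLogKernelConst * a ^ 2) := by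
  set G : Pt2 → ℝ≥0∞ := (ball 0 (2 * a)).indicator fun z => ENNReal.ofReal (log (‖z‖ / a) ^ 2)
  calc ∫⁻ y in ball x (2 * a), ENNReal.ofReal (log (dist x y / a) ^ 2)
        = ∫⁻ y in ball x (2 * a), G (y - x) := by
        refine setLIntegral_congr_fun measurableSet_ball fun y hy => ?_
        rw [show G (y - x) = _ from indicator_of_mem (by simpa [dist_eq_norm] using hy) _,
          dist_comm, dist_eq_norm]
    _ ≤ ∫⁻ y, G (y - x) := setLIntegral_le_lintegral _ _
    _ = ∫⁻ z in ball (0 : Pt2) (2 * a), ENNReal.ofReal (log (‖z‖ / a) ^ 2) := by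
        rw [lintegral_sub_right_eq_self G x, lintegral_indicator measurableSet_ball]
    _ = ENNReal.ofReal (4 * π * rescaledLogKernelConst * a ^ 2) := by
        rw [← setIntegral_log_norm_div_sq_ball ha, ofReal_integral_eq_lintegral_ofReal
          (integrableOn_log_norm_div_sq_ball ha) (.of_forall fun _ => sq_nonneg _)]

theorem integral_NOp_mul_eq_integral_prod {Ω : Set Pt2} {w : Pt2 → ℝ}
    (h : Integrable (fun p : Pt2 × Pt2 => logKernel p.1 p.2 * (w p.1 * w p.2))
      ((volume.restrict Ω).prod (volume.restrict Ω))) :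
    ∫ x in Ω, NOp Ω w x * w x
      = ∫ p, logKernel p.1 p.2 * (w p.1 * w p.2) ∂(volume.restrict Ω).prod (volume.restrict Ω) := by
  rw [integral_prod _ h]
  refine integral_congr_ae (.of_forall fun x => ?_)
  simp only [NOp, ← integral_mul_const]
  congr 1 with y
  ring

section Remainder

variable {Ω : Set Pt2} {c : Pt2} {a : ℝ}

theorem volume_le_of_subset_ball (ha : 0 ≤ a) (hΩ : Ω ⊆ ball c a) :
    volume Ω ≤ ENNReal.ofReal (π * a ^ 2) :=
  (measure_mono hΩ).trans_eq <| by
    rw [EuclideanSpace.volume_ball_fin_two, ← ENNReal.ofReal_pow ha,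
      ← ENNReal.ofReal_mul (by positivity), mul_comm]

theorem setLIntegral_rescaledLogKernel_sq_le (ha : 0 < a) {x : Pt2} (hΩ : Ω ⊆ ball x (2 * a)) :
    ∫⁻ y in Ω, ENNReal.ofReal (rescaledLogKernel a x y ^ 2)
      ≤ ENNReal.ofReal (rescaledLogKernelConst * a ^ 2 / π) := by
  have hsq : ∀ y, ENNReal.ofReal (rescaledLogKernel a x y ^ 2)
      = ENNReal.ofReal (4 * π ^ 2)⁻¹ * ENNReal.ofReal (log (dist x y / a) ^ 2) := fun y => by
    rw [← ENNReal.ofReal_mul (by positivity), rescaledLogKernel]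
    ring_nf
  calc ∫⁻ y in Ω, ENNReal.ofReal (rescaledLogKernel a x y ^ 2)
      ≤ ∫⁻ y in ball x (2 * a), ENNReal.ofReal (rescaledLogKernel a x y ^ 2) :=
        lintegral_mono' (Measure.restrict_mono hΩ le_rfl) le_rfl
    _ = ENNReal.ofReal (4 * π ^ 2)⁻¹
          * ∫⁻ y in ball x (2 * a), ENNReal.ofReal (log (dist x y / a) ^ 2) := by
        simp_rw [hsq]
        exact lintegral_const_mul' _ _ ENNReal.ofReal_ne_top
    _ ≤ ENNReal.ofReal (4 * π ^ 2)⁻¹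
          * ENNReal.ofReal (4 * π * rescaledLogKernelConst * a ^ 2) := by
        gcongr
        exact lintegral_log_dist_div_sq_le ha x
    _ = ENNReal.ofReal (rescaledLogKernelConst * a ^ 2 / π) := by
        rw [← ENNReal.ofReal_mul (by positivity)]
        congr 1
        field_simp

theorem lintegral_rescaledLogKernel_sq_le (ha : 0 < a) (hΩ : Ω ⊆ ball c a) :
    ∫⁻ p, ENNReal.ofReal (rescaledLogKernel a p.1 p.2 ^ 2)
        ∂(volume.restrict Ω).prod (volume.restrict Ω)
      ≤ ENNReal.ofReal (rescaledLogKernelConst * a ^ 4) := by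
  have hinner : ∀ᵐ x ∂volume.restrict Ω,
      ∫⁻ y in Ω, ENNReal.ofReal (rescaledLogKernel a x y ^ 2)
        ≤ ENNReal.ofReal (rescaledLogKernelConst * a ^ 2 / π) := by
    filter_upwards [ae_restrict_of_ae_restrict_of_subset hΩ (ae_restrict_mem measurableSet_ball)]
      with x hx
    refine setLIntegral_rescaledLogKernel_sq_le ha fun y hy => ?_
    rw [mem_ball] at hx ⊢
    linarith [dist_triangle_right y x c, mem_ball.1 (hΩ hy)]
  rw [lintegral_prod _ ((measurable_rescaledLogKernel a).pow_const 2).ennreal_ofReal.aemeasurable]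
  calc ∫⁻ x in Ω, ∫⁻ y in Ω, ENNReal.ofReal (rescaledLogKernel a x y ^ 2)
      ≤ ∫⁻ _ in Ω, ENNReal.ofReal (rescaledLogKernelConst * a ^ 2 / π) := lintegral_mono_ae hinner
    _ ≤ ENNReal.ofReal (rescaledLogKernelConst * a ^ 2 / π) * ENNReal.ofReal (π * a ^ 2) := by
        rw [setLIntegral_const]
        gcongr
        exact volume_le_of_subset_ball ha.le hΩ
    _ = ENNReal.ofReal (rescaledLogKernelConst * a ^ 4) := by
        rw [← ENNReal.ofReal_mul (by positivity [rescaledLogKernelConst_nonneg])]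
        congr 1
        field_simp

theorem memLp_rescaledLogKernel (ha : 0 < a) (hΩ : Ω ⊆ ball c a) :
    MemLp (fun p : Pt2 × Pt2 => rescaledLogKernel a p.1 p.2) 2
      ((volume.restrict Ω).prod (volume.restrict Ω)) :=
  (memLp_two_iff_integrable_sq (measurable_rescaledLogKernel a).aestronglyMeasurable).2
    ⟨((measurable_rescaledLogKernel a).pow_const 2).aestronglyMeasurable,
      (hasFiniteIntegral_iff_ofReal (.of_forall fun _ => sq_nonneg _)).2
        ((lintegral_rescaledLogKernel_sq_le ha hΩ).trans_lt ENNReal.ofReal_lt_top)⟩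

theorem integral_rescaledLogKernel_sq_le (ha : 0 < a) (hΩ : Ω ⊆ ball c a) :
    ∫ p, rescaledLogKernel a p.1 p.2 ^ 2 ∂(volume.restrict Ω).prod (volume.restrict Ω)
      ≤ rescaledLogKernelConst * a ^ 4 := by
  rw [integral_eq_lintegral_of_nonneg_ae (.of_forall fun _ => sq_nonneg _)
    ((measurable_rescaledLogKernel a).pow_const 2).aestronglyMeasurable]
  exact ENNReal.toReal_le_of_le_ofReal (by positivity [rescaledLogKernelConst_nonneg])
    (lintegral_rescaledLogKernel_sq_le ha hΩ)

theorem isFiniteMeasure_restrict_of_subset_ball (ha : 0 ≤ a) (hΩ : Ω ⊆ ball c a) :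
    IsFiniteMeasure (volume.restrict Ω) :=
  isFiniteMeasure_restrict.2 (ne_top_of_le_ne_top ENNReal.ofReal_ne_top
    (volume_le_of_subset_ball ha hΩ))

theorem abs_integral_NOp_mul_sub_le (ha : 0 < a) (hΩ : Ω ⊆ ball c a) {w : Pt2 → ℝ}
    (hw : MemLp w 2 (volume.restrict Ω)) :
    |(∫ x in Ω, NOp Ω w x * w x) - -log a / (2 * π) * (∫ x in Ω, w x) ^ 2|
      ≤ √rescaledLogKernelConst * a ^ 2 * ∫ x in Ω, w x ^ 2 := by
  have := isFiniteMeasure_restrict_of_subset_ball ha.le hΩ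
  set μ := volume.restrict Ω
  set r := fun p : Pt2 × Pt2 => rescaledLogKernel a p.1 p.2
  set ww := fun p : Pt2 × Pt2 => w p.1 * w p.2
  have hww : MemLp ww 2 (μ.prod μ) := memLp_two_mul_prod hw hw
  have hr : MemLp r 2 (μ.prod μ) := memLp_rescaledLogKernel ha hΩ
  have hwwI : Integrable ww (μ.prod μ) :=
    (hw.integrable one_le_two).mul_prod (hw.integrable one_le_two)
  have hrww : Integrable (fun p => r p * ww p) (μ.prod μ) := hr.integrable_mul hww
  have hsplit : (fun p => logKernel p.1 p.2 * ww p)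
      =ᵐ[μ.prod μ] fun p => -log a / (2 * π) * ww p + r p * ww p := by
    filter_upwards [Measure.ae_prod_fst_ne_snd] with p hp
    rw [logKernel_eq_add_rescaledLogKernel ha.ne' hp]
    ring
  have hKww : Integrable (fun p => logKernel p.1 p.2 * ww p) (μ.prod μ) :=
    ((hwwI.const_mul _).add hrww).congr hsplit.symm
  have hww_sq : ∫ p, ww p ^ 2 ∂μ.prod μ = (∫ x, w x ^ 2 ∂μ) ^ 2 := by
    simp only [ww, mul_pow]
    rw [integral_prod_mul (fun x => w x ^ 2) (fun x => w x ^ 2), sq]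
  have hremainder :
      |∫ p, r p * ww p ∂μ.prod μ| ≤ √rescaledLogKernelConst * a ^ 2 * ∫ x, w x ^ 2 ∂μ :=
    calc |∫ p, r p * ww p ∂μ.prod μ|
        ≤ √(∫ p, r p ^ 2 ∂μ.prod μ) * √(∫ p, ww p ^ 2 ∂μ.prod μ) :=
          abs_integral_mul_le_sqrt_mul_sqrt hr hww
      _ ≤ √(rescaledLogKernelConst * a ^ 4) * √((∫ x, w x ^ 2 ∂μ) ^ 2) := by
          rw [hww_sq]; gcongr; exact integral_rescaledLogKernel_sq_le ha hΩ
      _ = √rescaledLogKernelConst * a ^ 2 * ∫ x, w x ^ 2 ∂μ := by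
          rw [sqrt_sq (integral_nonneg fun _ => sq_nonneg _),
            sqrt_mul rescaledLogKernelConst_nonneg,
            show a ^ 4 = (a ^ 2) ^ 2 by ring, sqrt_sq (by positivity)]
  rw [integral_NOp_mul_eq_integral_prod hKww, integral_congr_ae hsplit,
    integral_add (hwwI.const_mul _) hrww, integral_const_mul,
    integral_prod_mul, ← sq, add_sub_cancel_left]
  exact hremainder

end Remainder

section Eigenvalue

variable {Ω : Set Pt2}

theorem NOp_congr_ae {f g : Pt2 → ℝ} (h : f =ᵐ[volume.restrict Ω] g) : NOp Ω f = NOp Ω g :=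
  funext fun _ => integral_congr_ae (h.mono fun y hy => by simp only [hy])

theorem quadForm_smul (r : ℝ) (u : Lp ℝ 2 (volume.restrict Ω)) :
    quadForm Ω (r • u) = r ^ 2 * quadForm Ω u := by
  have hcoe : ⇑(r • u) =ᵐ[volume.restrict Ω] fun x => r * u x := Lp.coeFn_smul r u
  have hNOp : NOp Ω ⇑(r • u) = fun x => r * NOp Ω u x := by
    rw [NOp_congr_ae hcoe]
    funext x
    simp only [NOp, ← integral_const_mul, mul_left_comm]
  rw [quadForm, quadForm, hNOp, ← integral_const_mul]
  refine integral_congr_ae (hcoe.mono fun x hx => ?_)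
  simp only [hx]
  ring

theorem quadForm_div_norm_sq_le_eigen2_zero {C : ℝ}
    (hC : ∀ u : Lp ℝ 2 (volume.restrict Ω), |quadForm Ω u| ≤ C * ‖u‖ ^ 2)
    {φ : Lp ℝ 2 (volume.restrict Ω)} (hφ : φ ≠ 0) :
    quadForm Ω φ / ‖φ‖ ^ 2 ≤ eigen2 Ω 0 := by
  have hquot : ∀ u : Lp ℝ 2 (volume.restrict Ω), u ≠ 0 → |quadForm Ω u / ‖u‖ ^ 2| ≤ C := by
    intro u hu
    have hu' : 0 < ‖u‖ ^ 2 := by positivity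
    rw [abs_div, abs_of_pos hu', div_le_iff₀ hu']
    exact hC u
  have hbdd : BddAbove {r : ℝ | ∃ Ξ : Submodule ℝ (Lp ℝ 2 (volume.restrict Ω)),
      Module.finrank ℝ ↥Ξ = 0 + 1 ∧
      r = sInf {q : ℝ | ∃ u ∈ Ξ, u ≠ 0 ∧ q = quadForm Ω u / ‖u‖ ^ 2}} := by
    refine ⟨C, ?_⟩
    rintro _ ⟨Ξ, hΞ, rfl⟩
    obtain ⟨u, huΞ, hu⟩ := Submodule.exists_mem_ne_zero_of_ne_bot
      (p := Ξ) (by rintro rfl; simp at hΞ)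
    have hbelow : BddBelow {q : ℝ | ∃ u ∈ Ξ, u ≠ 0 ∧ q = quadForm Ω u / ‖u‖ ^ 2} :=
      ⟨-C, by rintro _ ⟨v, -, hv, rfl⟩; exact neg_le_of_abs_le (hquot v hv)⟩
    exact (csInf_le hbelow ⟨u, huΞ, hu, rfl⟩).trans (le_of_abs_le (hquot u hu))
  have hspan : quadForm Ω φ / ‖φ‖ ^ 2
      ≤ sInf {q : ℝ | ∃ u ∈ ℝ ∙ φ, u ≠ 0 ∧ q = quadForm Ω u / ‖u‖ ^ 2} := by
    refine le_csInf ⟨_, φ, Submodule.mem_span_singleton_self φ, hφ, rfl⟩ ?_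
    rintro _ ⟨u, hu, hu0, rfl⟩
    obtain ⟨r, rfl⟩ := Submodule.mem_span_singleton.1 hu
    have hr : r ≠ 0 := by rintro rfl; simp at hu0
    rw [quadForm_smul, norm_smul, mul_pow, Real.norm_eq_abs, sq_abs,
      mul_div_mul_left _ _ (pow_ne_zero 2 hr)]
  exact hspan.trans (le_csSup hbdd ⟨ℝ ∙ φ, finrank_span_singleton hφ, rfl⟩)

end Eigenvalue

section SmallDomain

variable {Ω : Set Pt2} {c : Pt2} {a : ℝ}

theorem abs_quadForm_le (ha : 0 < a) (hΩ : Ω ⊆ ball c a) (u : Lp ℝ 2 (volume.restrict Ω)) :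
    |quadForm Ω u|
      ≤ (|log a / (2 * π)| * volume.real Ω + √rescaledLogKernelConst * a ^ 2) * ‖u‖ ^ 2 := by
  have := isFiniteMeasure_restrict_of_subset_ball ha.le hΩ
  have hdecomp := abs_integral_NOp_mul_sub_le ha hΩ (Lp.memLp u)
  have hmean := sq_integral_le_measureReal_mul (Lp.memLp u)
  rw [measureReal_restrict_apply_univ, ← Lp.norm_two_sq_eq_integral_sq] at hmean
  rw [← Lp.norm_two_sq_eq_integral_sq] at hdecomp
  have hmain : |-log a / (2 * π) * (∫ x in Ω, u x) ^ 2|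
      = |log a / (2 * π)| * (∫ x in Ω, u x) ^ 2 := by
    rw [abs_mul, abs_sq, neg_div, abs_neg]
  calc |quadForm Ω u|
      ≤ |log a / (2 * π)| * (∫ x in Ω, u x) ^ 2 + √rescaledLogKernelConst * a ^ 2 * ‖u‖ ^ 2 := by
        rw [← hmain]
        exact le_add_of_sub_left_le ((abs_sub_abs_le_abs_sub _ _).trans hdecomp)
    _ ≤ |log a / (2 * π)| * (volume.real Ω * ‖u‖ ^ 2)
          + √rescaledLogKernelConst * a ^ 2 * ‖u‖ ^ 2 := by
        gcongr
    _ = (|log a / (2 * π)| * volume.real Ω + √rescaledLogKernelConst * a ^ 2) * ‖u‖ ^ 2 := by ring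

theorem eigen2_zero_ge (ha : 0 < a) (hΩ : Ω ⊆ ball c a) (hΩ0 : volume Ω ≠ 0) :
    -log a / (2 * π) * volume.real Ω - √rescaledLogKernelConst * a ^ 2 ≤ eigen2 Ω 0 := by
  have := isFiniteMeasure_restrict_of_subset_ball ha.le hΩ
  have hV : 0 < volume.real Ω := ENNReal.toReal_pos hΩ0
    ((volume_le_of_subset_ball ha.le hΩ).trans_lt ENNReal.ofReal_lt_top).ne
  have hone : MemLp (fun _ => (1 : ℝ)) 2 (volume.restrict Ω) := memLp_const 1
  have hnorm : ‖hone.toLp‖ ^ 2 = volume.real Ω := by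
    rw [hone.norm_toLp_two_sq]
    simp
  have hquad : quadForm Ω hone.toLp = ∫ x in Ω, NOp Ω (fun _ => 1) x := by
    rw [quadForm, NOp_congr_ae hone.coeFn_toLp]
    exact integral_congr_ae (hone.coeFn_toLp.mono fun x hx => by simp only [hx, mul_one])
  have hdecomp := abs_integral_NOp_mul_sub_le ha hΩ hone
  simp only [integral_const, measureReal_restrict_apply_univ, smul_eq_mul, mul_one, one_pow,
    ← hquad] at hdecomp
  calc -log a / (2 * π) * volume.real Ω - √rescaledLogKernelConst * a ^ 2
      ≤ quadForm Ω hone.toLp / ‖hone.toLp‖ ^ 2 := by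
        rw [hnorm, le_div_iff₀ hV]
        linarith [neg_le_of_abs_le hdecomp]
    _ ≤ eigen2 Ω 0 :=
        quadForm_div_norm_sq_le_eigen2_zero (abs_quadForm_le ha hΩ)
          (fun h => by simp [h, hV.ne] at hnorm)

theorem eigen2_zero_le_of_eigenfunction (ha : 0 < a) (hΩ : Ω ⊆ ball c a) {v : Pt2 → ℝ}
    (hv : MemLp v 2 (volume.restrict Ω)) (hnorm : ∫ x in Ω, v x ^ 2 = 1)
    (heig : ∀ᵐ x ∂volume.restrict Ω, NOp Ω v x = eigen2 Ω 0 * v x) :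
    eigen2 Ω 0 ≤ -log a / (2 * π) * (∫ x in Ω, v x) ^ 2 + √rescaledLogKernelConst * a ^ 2 := by
  have hquad : ∫ x in Ω, NOp Ω v x * v x = eigen2 Ω 0 := by
    rw [integral_congr_ae (heig.mono fun x hx => by rw [hx, mul_assoc, ← sq]),
      integral_const_mul, hnorm, mul_one]
  have hdecomp := abs_integral_NOp_mul_sub_le ha hΩ hv
  rw [hquad, hnorm, mul_one] at hdecomp
  linarith [le_abs_self (eigen2 Ω 0 - -log a / (2 * π) * (∫ x in Ω, v x) ^ 2)]

theorem measureReal_sub_sq_integral_le_of_eigenfunction (ha0 : 0 < a) (ha1 : a < 1)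
    (hΩ : Ω ⊆ ball c a) (hΩ0 : volume Ω ≠ 0) {v : Pt2 → ℝ}
    (hv : MemLp v 2 (volume.restrict Ω)) (hnorm : ∫ x in Ω, v x ^ 2 = 1)
    (heig : ∀ᵐ x ∂volume.restrict Ω, NOp Ω v x = eigen2 Ω 0 * v x) :
    volume.real Ω - (∫ x in Ω, v x) ^ 2 ≤ 4 * π * √rescaledLogKernelConst * a ^ 2 / -log a := by
  have hlog : 0 < -log a := neg_pos.2 (log_neg ha0 ha1)
  have hgap : -log a / (2 * π) * (volume.real Ω - (∫ x in Ω, v x) ^ 2)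
      ≤ 2 * √rescaledLogKernelConst * a ^ 2 := by
    linarith [(eigen2_zero_ge ha0 hΩ hΩ0).trans
      (eigen2_zero_le_of_eigenfunction ha0 hΩ hv hnorm heig)]
  rw [le_div_iff₀ hlog]
  calc (volume.real Ω - (∫ x in Ω, v x) ^ 2) * -log a
      = 2 * π * (-log a / (2 * π) * (volume.real Ω - (∫ x in Ω, v x) ^ 2)) := by
        field_simp
    _ ≤ 2 * π * (2 * √rescaledLogKernelConst * a ^ 2) := by gcongr
    _ = 4 * π * √rescaledLogKernelConst * a ^ 2 := by ring

end SmallDomain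

theorem measureReal_ball_fin_two (x : Pt2) {r : ℝ} (hr : 0 ≤ r) :
    volume.real (ball x r) = π * r ^ 2 := by
  rw [measureReal_def, EuclideanSpace.volume_ball_fin_two, ENNReal.toReal_mul,
    ENNReal.toReal_pow, ENNReal.toReal_ofReal hr, ENNReal.toReal_ofReal pi_pos.le, mul_comm]

theorem sq_inv_mul_integral_ball_bounds {a : ℝ} (ha0 : 0 < a) (ha1 : a < 1) {v : Pt2 → ℝ}
    (hv : MemLp v 2 (volume.restrict (ball 0 a))) (hnorm : ∫ x in ball (0 : Pt2) a, v x ^ 2 = 1)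
    (heig : ∀ᵐ x ∂volume.restrict (ball 0 a), NOp (ball 0 a) v x = eigen2 (ball 0 a) 0 * v x) :
    π - 4 * π * √rescaledLogKernelConst / -log a ≤ (a⁻¹ * ∫ x in ball (0 : Pt2) a, v x) ^ 2 ∧
      (a⁻¹ * ∫ x in ball (0 : Pt2) a, v x) ^ 2 ≤ π := by
  have := isFiniteMeasure_restrict_of_subset_ball ha0.le (subset_refl (ball (0 : Pt2) a))
  have hV := measureReal_ball_fin_two (0 : Pt2) ha0.le
  have hgap := measureReal_sub_sq_integral_le_of_eigenfunction ha0 ha1 subset_rfl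
    (by simp [ha0, pi_pos]) hv hnorm heig
  have hmean := sq_integral_le_measureReal_mul hv
  rw [measureReal_restrict_apply_univ, hnorm, hV, mul_one] at hmean
  rw [hV] at hgap
  rw [mul_pow, inv_pow, ← div_eq_inv_mul]
  have ha2 : 0 < a ^ 2 := by positivity
  constructor
  · rw [le_div_iff₀ ha2]
    calc (π - 4 * π * √rescaledLogKernelConst / -log a) * a ^ 2
        = π * a ^ 2 - 4 * π * √rescaledLogKernelConst * a ^ 2 / -log a := by ring
      _ ≤ _ := by linarith
  · rwa [div_le_iff₀ ha2]

/-- If, for each sufficiently small `a > 0`, `v a` is an `L²(D_a)`-normalized eigenfunction of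
the logarithmic potential operator on the disc `D_a` of radius `a` centered at the origin,
associated with the largest eigenvalue and with nonnegative integral, then
`a⁻¹ ∫_{D_a} v_a → √π` as `a → 0⁺`. -/
theorem integral_first_eigenfunction_disc_limit :
    ∃ a₀ : ℝ, 0 < a₀ ∧ a₀ < 1 ∧
      ∀ v : ℝ → Pt2 → ℝ,
        (∀ a : ℝ, 0 < a → a < a₀ →
          MemLp (v a) 2 (volume.restrict (Metric.ball (0 : Pt2) a)) ∧
          (∫ x in Metric.ball (0 : Pt2) a, v a x ^ 2) = 1 ∧
          (∀ᵐ x ∂(volume.restrict (Metric.ball (0 : Pt2) a)),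
            NOp (Metric.ball (0 : Pt2) a) (v a) x =
              eigen2 (Metric.ball (0 : Pt2) a) 0 * v a x) ∧
          0 ≤ ∫ x in Metric.ball (0 : Pt2) a, v a x) →
        Filter.Tendsto (fun a : ℝ => a⁻¹ * ∫ x in Metric.ball (0 : Pt2) a, v a x)
          (nhdsWithin 0 (Set.Ioi 0)) (nhds (Real.sqrt π)) := by
  refine ⟨1 / 2, by norm_num, by norm_num, fun v hv => ?_⟩
  set γ := fun a : ℝ => a⁻¹ * ∫ x in ball (0 : Pt2) a, v a x
  have hbounds : ∀ᶠ a in 𝓝[>] 0,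
      (π - 4 * π * √rescaledLogKernelConst / -log a ≤ γ a ^ 2 ∧ γ a ^ 2 ≤ π) ∧ 0 ≤ γ a := by
    filter_upwards [Ioo_mem_nhdsGT (by norm_num : (0 : ℝ) < 1 / 2)] with a ⟨ha0, ha⟩
    obtain ⟨hmem, hnorm, heig, hpos⟩ := hv a ha0 ha
    exact ⟨sq_inv_mul_integral_ball_bounds ha0 (by linarith) hmem hnorm heig,
      mul_nonneg (inv_nonneg.2 ha0.le) hpos⟩
  have hlower :
      Tendsto (fun a => π - 4 * π * √rescaledLogKernelConst / -log a) (𝓝[>] 0) (𝓝 π) := by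
    simpa using tendsto_const_nhds.sub
      (tendsto_const_nhds.div_atTop (tendsto_neg_atBot_atTop.comp tendsto_log_nhdsGT_zero))
  have hsq : Tendsto (fun a => γ a ^ 2) (𝓝[>] 0) (𝓝 π) :=
    tendsto_of_tendsto_of_tendsto_of_le_of_le' hlower tendsto_const_nhds
      (hbounds.mono fun _ h => h.1.1) (hbounds.mono fun _ h => h.1.2)
  exact ((continuous_sqrt.tendsto π).comp hsq).congr' (hbounds.mono fun a h => sqrt_sq h.2)
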